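/- arXiv:2408.15925 — 6 statements merged into one kernel-verified Lean document; each statement's English description precedes it below -/
import Mathlib

section
/- Let 0, f₁, …, f_L be vectors in F_q^k with f_i ≠ f_j and f_i ≠ 0 for all i ≠ j, and suppose dim Span{f₁,…,f_L} = ℓ. Then there exists a partition H₁,…,H_{ℓ+1} of the set {0, f₁,…,f_L} such that for every choice of representatives h_i ∈ H_i (i = 1,…,ℓ+1), the affine dimension of {h₁,…,h_{ℓ+1}} equals ℓ (i.e., the vectors h₁-h_{ℓ+1},…,h_ℓ-h_{ℓ+1} are linearly independent). -/
open Submodule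

theorem partition_with_full_affine_dim_transversals
    {F : Type*} [Field F] {k L ℓ : ℕ} (f : Fin L → (Fin k → F))
    (hne : ∀ i, f i ≠ 0) (hinj : Function.Injective f)
    (hdim : Module.finrank F (Submodule.span F (Set.range f)) = ℓ) :
    ∃ H : Fin (ℓ + 1) → Set (Fin k → F),
      (∀ i, (H i).Nonempty) ∧
      (Pairwise fun i j => Disjoint (H i) (H j)) ∧
      (⋃ i, H i) = insert 0 (Set.range f) ∧
      ∀ h : Fin (ℓ + 1) → (Fin k → F), (∀ i, h i ∈ H i) →
        LinearIndependent F (fun i : Fin ℓ => h i.castSucc - h (Fin.last ℓ)) := by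
  classical
  obtain ⟨s, hs_sub, hs_span, hs_li⟩ := exists_linearIndependent F (Set.range f)
  have hs_fin : s.Finite := (Set.finite_range f).subset hs_sub
  haveI : Fintype s := hs_fin.fintype
  have hcard : s.toFinset.card = ℓ := by
    rw [← finrank_span_set_eq_card hs_li, hs_span, hdim]
  -- enumerate the basis
  have hcard' : Fintype.card s = ℓ := by rwa [Set.toFinset_card] at hcard
  let e : Fin ℓ ≃ s := (Fintype.equivFinOfCardEq hcard').symm
  let b : Fin ℓ → (Fin k → F) := fun i => (e i : Fin k → F)
  have hb_li : LinearIndependent F b := hs_li.comp e e.injective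
  have hb_mem : ∀ i, b i ∈ s := fun i => (e i).2
  have hb_range : Set.range b = s := by
    ext x
    constructor
    · rintro ⟨i, rfl⟩; exact hb_mem i
    · intro hx; exact ⟨e.symm ⟨x, hx⟩, by simp [b]⟩
  -- the flag
  set V : ℕ → Submodule F (Fin k → F) :=
    fun n => span F (b '' {j : Fin ℓ | (j : ℕ) < n}) with hV
  have hVmono : ∀ {m n : ℕ}, m ≤ n → V m ≤ V n := fun {m n} hmn =>
    span_mono (Set.image_mono fun j hj => lt_of_lt_of_le hj hmn)
  have hV0 : V 0 = ⊥ := by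
    have : {j : Fin ℓ | (j : ℕ) < 0} = ∅ := by ext j; simp
    simp [hV, this]
  have hVtop : ∀ v ∈ Set.range f, v ∈ V ℓ := by
    intro v hv
    have h1 : {j : Fin ℓ | (j : ℕ) < ℓ} = Set.univ := by ext j; simp [j.is_lt]
    have h2 : V ℓ = span F s := by
      rw [hV]; simp only [h1, Set.image_univ, hb_range]
    rw [h2, hs_span]
    exact subset_span hv
  have hbV : ∀ i : Fin ℓ, b i ∈ V ((i : ℕ) + 1) :=
    fun i => subset_span ⟨i, by simp, rfl⟩
  have hbnot : ∀ i : Fin ℓ, b i ∉ V (i : ℕ) := by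
    intro i hi
    exact hb_li.notMem_span_image (by simp) hi
  -- levels
  have hlevel : ∀ v ∈ Set.range f, ∃ n : ℕ, n < ℓ ∧ v ∈ V (n + 1) ∧ v ∉ V n := by
    intro v hv
    have hvne : v ≠ 0 := by obtain ⟨i, rfl⟩ := hv; exact hne i
    have hex : ∃ n, v ∈ V n := ⟨ℓ, hVtop v hv⟩
    set n := Nat.find hex with hn
    have hnspec : v ∈ V n := Nat.find_spec hex
    have hnle : n ≤ ℓ := Nat.find_le (hVtop v hv)
    have hn0 : n ≠ 0 := by
      intro h0
      rw [h0, hV0] at hnspec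
      exact hvne (by simpa using hnspec)
    refine ⟨n - 1, by omega, ?_, ?_⟩
    · have : n - 1 + 1 = n := by omega
      rw [this]; exact hnspec
    · exact Nat.find_min hex (by omega)
  -- the partition
  refine ⟨fun i => if h : (i : ℕ) < ℓ then
      {v | v ∈ Set.range f ∧ v ∈ V ((i : ℕ) + 1) ∧ v ∉ V (i : ℕ)} else {0}, ?_, ?_, ?_, ?_⟩
  · intro i
    by_cases h : (i : ℕ) < ℓ
    · refine ⟨b ⟨(i : ℕ), h⟩, ?_⟩
      simp only [dif_pos h]
      exact ⟨hs_sub (hb_mem _), hbV ⟨(i : ℕ), h⟩, hbnot ⟨(i : ℕ), h⟩⟩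
    · exact ⟨0, by simp only [dif_neg h]; rfl⟩
  · intro i j hij
    rw [Set.disjoint_left]
    intro v hvi hvj
    by_cases hi : (i : ℕ) < ℓ <;> by_cases hj : (j : ℕ) < ℓ
    · simp only [dif_pos hi] at hvi; simp only [dif_pos hj] at hvj
      obtain ⟨-, hvi1, hvi2⟩ := hvi
      obtain ⟨-, hvj1, hvj2⟩ := hvj
      have : (i : ℕ) ≠ (j : ℕ) := fun h => hij (Fin.ext h)
      rcases lt_or_gt_of_ne this with h | h
      · exact hvj2 (hVmono (by omega) hvi1)
      · exact hvi2 (hVmono (by omega) hvj1)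
    · simp only [dif_pos hi] at hvi; simp only [dif_neg hj] at hvj
      obtain ⟨⟨m, rfl⟩, -, -⟩ := hvi
      exact hne m hvj
    · simp only [dif_neg hi] at hvi; simp only [dif_pos hj] at hvj
      obtain ⟨⟨m, rfl⟩, -, -⟩ := hvj
      exact hne m hvi
    · exact hij (Fin.ext (by omega))
  · ext v
    simp only [Set.mem_iUnion, Set.mem_insert_iff]
    constructor
    · rintro ⟨i, hi⟩
      by_cases h : (i : ℕ) < ℓ
      · simp only [dif_pos h] at hi; exact Or.inr hi.1
      · simp only [dif_neg h] at hi; exact Or.inl hi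
    · rintro (rfl | hv)
      · refine ⟨Fin.last ℓ, ?_⟩
        simp only [dif_neg (show ¬((Fin.last ℓ : ℕ) < ℓ) by simp)]; rfl
      · obtain ⟨n, hn, h1, h2⟩ := hlevel v hv
        refine ⟨⟨n, by omega⟩, ?_⟩
        simp only [dif_pos (show ((⟨n, by omega⟩ : Fin (ℓ+1)) : ℕ) < ℓ from hn)]
        exact ⟨hv, h1, h2⟩
  · intro h hh
    have hlast : h (Fin.last ℓ) = 0 := by
      have := hh (Fin.last ℓ)
      simp only [dif_neg (show ¬((Fin.last ℓ : ℕ) < ℓ) by simp)] at this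
      exact this
    have hmem : ∀ i : Fin ℓ, h i.castSucc ∈ Set.range f ∧
        h i.castSucc ∈ V ((i : ℕ) + 1) ∧ h i.castSucc ∉ V (i : ℕ) := by
      intro i
      have := hh i.castSucc
      simp only [dif_pos (show ((i.castSucc : Fin (ℓ+1)) : ℕ) < ℓ by simpa using i.is_lt)] at this
      exact this
    rw [Fintype.linearIndependent_iff]
    intro c hc
    simp only [hlast, sub_zero] at hc
    by_contra hcon
    push_neg at hcon
    obtain ⟨i0, hi0⟩ := hcon
    set t : Finset (Fin ℓ) := Finset.univ.filter (fun i => c i ≠ 0) with ht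
    have htne : t.Nonempty := ⟨i0, by simp [ht, hi0]⟩
    set j := t.max' htne with hj
    have hcj : c j ≠ 0 := by
      have := t.max'_mem htne
      simpa [ht] using this
    have hle : ∀ i ∈ t, i ≤ j := fun i hi => t.le_max' i hi
    have hsum : ∑ i ∈ Finset.univ.erase j, c i • h i.castSucc + c j • h j.castSucc = 0 :=
      (Finset.sum_erase_add Finset.univ (fun i => c i • h i.castSucc)
        (Finset.mem_univ j)).trans hc
    have hrest : ∑ i ∈ Finset.univ.erase j, c i • h i.castSucc ∈ V (j : ℕ) := by
      refine sum_mem ?_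
      intro i hi
      by_cases hci : c i = 0
      · simp [hci]
      · have hit : i ∈ t := by simp [ht, hci]
        have hij : i < j := lt_of_le_of_ne (hle i hit) (Finset.ne_of_mem_erase hi)
        exact smul_mem _ _ (hVmono (by exact_mod_cast hij) (hmem i).2.1)
    have : h j.castSucc ∈ V (j : ℕ) := by
      have h1 : c j • h j.castSucc = -∑ i ∈ Finset.univ.erase j, c i • h i.castSucc := by
        rw [eq_neg_iff_add_eq_zero, add_comm]
        exact hsum
      have h2 : h j.castSucc = (c j)⁻¹ • (c j • h j.castSucc) := by
        rw [inv_smul_smul₀ hcj]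
      rw [h2, h1]
      exact smul_mem _ _ (neg_mem hrest)
    exact (hmem j).2.2 this
end

section
/- Let {H_i}_{i∈[ℓ+1]} be a partition of a finite vertex set V of vectors such that every transversal (one point from each H_i) has affine dimension ℓ. Then for any subset e ⊆ V, the affine dimension of e is at least (the number of parts H_i that e intersects) minus 1. -/
open Submodule

open scoped Classical

/-- If `{H i}` is a partition of a finite vertex set `V` of vectors such that every
transversal has affine dimension `ℓ`, then for every `e ⊆ V` the affine dimension of `e`
is at least the number of parts that `e` intersects, minus one. -/
theorem affineDim_ge_parts_intersected
    {F : Type*} [Field F] {k ℓ : ℕ} (V : Finset (Fin k → F))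
    (H : Fin (ℓ + 1) → Finset (Fin k → F))
    (hne : ∀ i, (H i).Nonempty)
    (hdisj : Pairwise fun i j => Disjoint (H i) (H j))
    (hcover : Finset.univ.biUnion H = V)
    (htrans : ∀ h : Fin (ℓ + 1) → (Fin k → F), (∀ i, h i ∈ H i) →
      Module.finrank F (Submodule.span F
        (Set.range fun i : Fin ℓ => h i.castSucc - h (Fin.last ℓ))) = ℓ)
    (e : Finset (Fin k → F)) (he : e ⊆ V) (x₀ : Fin k → F) (hx₀ : x₀ ∈ e) :
    (Finset.univ.filter fun i => (e ∩ H i).Nonempty).card - 1 ≤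
      Module.finrank F (Submodule.span F ((fun v => v - x₀) '' (e : Set (Fin k → F)))) := by
  classical
  set S : Finset (Fin (ℓ + 1)) := Finset.univ.filter fun i => (e ∩ H i).Nonempty with hS
  -- find the part containing x₀
  have hx₀V : x₀ ∈ Finset.univ.biUnion H := by rw [hcover]; exact he hx₀
  obtain ⟨i0, -, hi0⟩ := Finset.mem_biUnion.mp hx₀V
  have hi0S : i0 ∈ S := by
    simp only [hS, Finset.mem_filter, Finset.mem_univ, true_and]
    exact ⟨x₀, Finset.mem_inter.mpr ⟨hx₀, hi0⟩⟩
  -- choose the transversal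
  have hchoice : ∀ i : Fin (ℓ + 1), ∃ v, v ∈ H i ∧ (i ∈ S → v ∈ e) ∧ (i = i0 → v = x₀) := by
    intro i
    by_cases h1 : i = i0
    · exact ⟨x₀, by subst h1; exact hi0, fun _ => hx₀, fun _ => rfl⟩
    · by_cases h2 : i ∈ S
      · have := (Finset.mem_filter.mp h2).2
        obtain ⟨v, hv⟩ := this
        exact ⟨v, (Finset.mem_inter.mp hv).2, fun _ => (Finset.mem_inter.mp hv).1,
          fun h => absurd h h1⟩
      · obtain ⟨v, hv⟩ := hne i
        exact ⟨v, hv, fun h => absurd h h2, fun h => absurd h h1⟩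
  choose h hH hE hI0 using hchoice
  have hhi0 : h i0 = x₀ := hI0 i0 rfl
  -- linear independence of differences
  have hLI : LinearIndependent F fun i : Fin ℓ => h i.castSucc - h (Fin.last ℓ) := by
    rw [linearIndependent_iff_card_eq_finrank_span]
    rw [Set.finrank, htrans h hH, Fintype.card_fin]
  -- affine independence
  have hAI : AffineIndependent F h := by
    rw [affineIndependent_iff_linearIndependent_vsub F h (Fin.last ℓ)]
    have := hLI.comp (finSuccAboveEquiv (Fin.last ℓ)).symm
      (Equiv.injective _)
    convert this using 1
    funext x
    have : ((finSuccAboveEquiv (Fin.last ℓ)) ((finSuccAboveEquiv (Fin.last ℓ)).symm x)) = x :=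
      Equiv.apply_symm_apply _ _
    rw [finSuccAboveEquiv_apply] at this
    have hval : (Fin.last ℓ).succAbove ((finSuccAboveEquiv (Fin.last ℓ)).symm x)
        = (x : Fin (ℓ + 1)) := congrArg Subtype.val this
    simp only [Function.comp, vsub_eq_sub]
    rw [← hval, Fin.succAbove_last]
    all_goals rfl
  -- restrict to S
  have hAIS : AffineIndependent F fun i : {i // i ∈ S} => h i :=
    hAI.comp_embedding (Function.Embedding.subtype _)
  have hLIS : LinearIndependent F
      fun j : {x : {i // i ∈ S} // x ≠ (⟨i0, hi0S⟩ : {i // i ∈ S})} =>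
        h (j : {i // i ∈ S}) - x₀ := by
    have := (affineIndependent_iff_linearIndependent_vsub F
      (fun i : {i // i ∈ S} => h i) ⟨i0, hi0S⟩).mp hAIS
    simpa [vsub_eq_sub, hhi0] using this
  -- finrank bound
  have hsub : Set.range (fun j : {x : {i // i ∈ S} // x ≠ (⟨i0, hi0S⟩ : {i // i ∈ S})} =>
      h (j : {i // i ∈ S}) - x₀) ⊆ (fun v => v - x₀) '' (e : Set (Fin k → F)) := by
    rintro _ ⟨j, rfl⟩
    exact ⟨h (j : {i // i ∈ S}), hE _ (j : {i // i ∈ S}).2, rfl⟩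
  have hmono := Submodule.finrank_mono (Submodule.span_mono hsub
    (R := F) (M := Fin k → F))
  have hcard := finrank_span_eq_card hLIS
  have hcardeq : Fintype.card {x : {i // i ∈ S} // x ≠ (⟨i0, hi0S⟩ : {i // i ∈ S})}
      = S.card - 1 := by
    have h1 : Fintype.card {x : {i // i ∈ S} // ¬ x = (⟨i0, hi0S⟩ : {i // i ∈ S})}
        = Fintype.card {i // i ∈ S}
          - Fintype.card {x : {i // i ∈ S} // x = (⟨i0, hi0S⟩ : {i // i ∈ S})} :=
      Fintype.card_subtype_compl _
    simp only [ne_eq]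
    rw [h1, Fintype.card_coe, Fintype.card_subtype_eq]
  omega
end

section
/- Let f₁,…,f_s ∈ F_q[X] be polynomials of degree < k with k < q, and let γ be a generator of the multiplicative group F_q^×. The coefficient vectors of f₁,…,f_s are linearly independent over F_q if and only if the determinant of the folded Wronskian matrix W_γ(f₁,…,f_s)(X), whose (i,j)-entry is f_j(γ^{i-1}X), is a nonzero polynomial. -/
open Polynomial

noncomputable section FoldedWronskianAux

variable {F : Type*} [Field F]

private lemma foldedW_lemA {K : Type*} [Field K] (σ : K →+* K) :
    ∀ (s : ℕ) (u : Fin s → K),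
      (Matrix.of fun i j : Fin s => (σ ^ (i : ℕ)) (u j)).det = 0 →
      ∃ c : Fin s → K, c ≠ 0 ∧ (∀ j, σ (c j) = c j) ∧ ∑ j, c j * u j = 0 := by
  have hps : ∀ (i : ℕ) (x : K), σ ((σ ^ i) x) = (σ ^ (i+1)) x := by
    intro i x; rw [pow_succ']; rfl
  intro s
  induction s with
  | zero =>
    intro u h
    simp [Matrix.det_fin_zero] at h
  | succ n ih =>
    intro u h
    by_cases h' : (Matrix.of fun i j : Fin n => (σ ^ (i : ℕ)) (u j.castSucc)).det = 0
    · obtain ⟨c, hc0, hcf, hcs⟩ := ih (fun j => u j.castSucc) h'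
      refine ⟨Fin.snoc c 0, ?_, ?_, ?_⟩
      · intro hz
        apply hc0
        funext j
        have := congrFun hz j.castSucc
        simpa using this
      · intro j
        refine Fin.lastCases ?_ ?_ j
        · simp
        · intro i; simpa using hcf i
      · rw [Fin.sum_univ_castSucc]
        simpa using hcs
    · -- main case
      obtain ⟨v, hv0, hv⟩ := (Matrix.exists_mulVec_eq_zero_iff).2 h
      have hrow : ∀ i : Fin (n+1), ∑ j, (σ ^ (i:ℕ)) (u j) * v j = 0 := by
        intro i
        have := congrFun hv i
        simpa [Matrix.mulVec, dotProduct] using this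
      have hlast : v (Fin.last n) ≠ 0 := by
        intro hvl
        apply h'
        rw [← Matrix.exists_mulVec_eq_zero_iff]
        refine ⟨fun j => v j.castSucc, ?_, ?_⟩
        · intro hz
          apply hv0
          funext j
          refine Fin.lastCases ?_ ?_ j
          · exact hvl
          · intro i; exact congrFun hz i
        · funext i
          have := hrow i.castSucc
          rw [Fin.sum_univ_castSucc, hvl, mul_zero, add_zero] at this
          simpa [Matrix.mulVec, dotProduct] using this
      set a := v (Fin.last n) with ha
      have key : ∀ j : Fin (n+1), a * σ (v j) - σ a * v j = 0 := by
        have hmap : ((Matrix.of fun i j : Fin n => (σ ^ (i : ℕ)) (u j.castSucc)).map σ).det ≠ 0 := by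
          have hdet : ((Matrix.of fun i j : Fin n => (σ ^ (i : ℕ)) (u j.castSucc)).map σ).det
              = σ ((Matrix.of fun i j : Fin n => (σ ^ (i : ℕ)) (u j.castSucc)).det) := by
            rw [← RingHom.mapMatrix_apply, ← RingHom.map_det]
          rw [hdet]
          intro hz
          exact h' (σ.injective (by simpa using hz))
        have hN : ∀ i : Fin n, ∑ j : Fin n,
            (σ ^ ((i:ℕ)+1)) (u j.castSucc) * (a * σ (v j.castSucc) - σ a * v j.castSucc) = 0 := by
          intro i
          have e1 : ∑ j, (σ ^ ((i:ℕ)+1)) (u j) * σ (v j) = 0 := by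
            have h0 := congrArg σ (hrow i.castSucc)
            rw [map_sum, map_zero] at h0
            rw [← h0]
            refine Finset.sum_congr rfl fun j _ => ?_
            rw [map_mul, hps]
            simp
          have e2 : ∑ j, (σ ^ ((i:ℕ)+1)) (u j) * v j = 0 := by
            have := hrow i.succ
            simpa [Fin.val_succ] using this
          have comb : ∑ j, (σ ^ ((i:ℕ)+1)) (u j) * (a * σ (v j) - σ a * v j) = 0 := by
            have hc : ∑ j, (σ ^ ((i:ℕ)+1)) (u j) * (a * σ (v j) - σ a * v j)
                = a * (∑ j, (σ ^ ((i:ℕ)+1)) (u j) * σ (v j))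
                  - σ a * (∑ j, (σ ^ ((i:ℕ)+1)) (u j) * v j) := by
              rw [Finset.mul_sum, Finset.mul_sum, ← Finset.sum_sub_distrib]
              refine Finset.sum_congr rfl fun j _ => ?_
              ring
            rw [hc, e1, e2, mul_zero, mul_zero, sub_zero]
          have hzlast : (σ ^ ((i:ℕ)+1)) (u (Fin.last n))
              * (a * σ (v (Fin.last n)) - σ a * v (Fin.last n)) = 0 := by
            rw [← ha]; ring
          rw [Fin.sum_univ_castSucc, hzlast, add_zero] at comb
          exact comb
        have hz : (fun j : Fin n => a * σ (v j.castSucc) - σ a * v j.castSucc) = 0 := by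
          by_contra hne
          apply hmap
          rw [← Matrix.exists_mulVec_eq_zero_iff]
          refine ⟨_, hne, ?_⟩
          funext i
          have hNi := hN i
          simp only [Matrix.mulVec, dotProduct, Matrix.map_apply, Matrix.of_apply,
            Pi.zero_apply]
          rw [← hNi]
          refine Finset.sum_congr rfl fun j _ => ?_
          rw [hps]
        intro j
        refine Fin.lastCases ?_ ?_ j
        · rw [← ha]; ring
        · intro i; exact congrFun hz i
      have hsa : σ a ≠ 0 := fun hz => hlast (σ.injective (by simpa using hz))
      refine ⟨fun j => v j / a, ?_, ?_, ?_⟩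
      · intro hz
        have h1 := congrFun hz (Fin.last n)
        simp only [Pi.zero_apply, _root_.div_eq_zero_iff] at h1
        rw [← ha] at h1
        rcases h1 with h1 | h1 <;> exact hlast h1
      · intro j
        rw [map_div₀, div_eq_div_iff hsa hlast]
        linear_combination key j
      · have h0 : ∑ j, (σ ^ ((0 : Fin (n+1)):ℕ)) (u j) * v j = 0 := hrow 0
        have h0' : ∑ j, u j * v j = 0 := by
          rw [← h0]
          refine Finset.sum_congr rfl fun j _ => ?_
          norm_num
        calc ∑ j, v j / a * u j = ∑ j, (u j * v j) / a := by
              refine Finset.sum_congr rfl fun j _ => ?_; ring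
          _ = (∑ j, u j * v j) / a := by rw [Finset.sum_div]
          _ = 0 := by rw [h0', zero_div]


private def foldedW_compEquiv (a : F) (ha : a ≠ 0) : F[X] ≃ₐ[F] F[X] :=
  AlgEquiv.ofAlgHom (aeval (C a * X)) (aeval (C a⁻¹ * X))
    (by
      apply Polynomial.algHom_ext
      simp only [AlgHom.coe_comp, Function.comp_apply, aeval_X, map_mul, aeval_C,
        Polynomial.algebraMap_eq, AlgHom.coe_id, id_eq]
      rw [← mul_assoc, ← C_mul, inv_mul_cancel₀ ha, C_1, one_mul])
    (by
      apply Polynomial.algHom_ext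
      simp only [AlgHom.coe_comp, Function.comp_apply, aeval_X, map_mul, aeval_C,
        Polynomial.algebraMap_eq, AlgHom.coe_id, id_eq]
      rw [← mul_assoc, ← C_mul, mul_inv_cancel₀ ha, C_1, one_mul])

private lemma foldedW_compEquiv_apply (a : F) (ha : a ≠ 0) (f : F[X]) :
    foldedW_compEquiv a ha f = f.comp (C a * X) := by
  simp [foldedW_compEquiv, AlgEquiv.ofAlgHom_apply, aeval_def, eval₂_eq_eval_map, Polynomial.comp]

private def foldedW_shiftHom (a : F) (ha : a ≠ 0) : RatFunc F →+* RatFunc F :=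
  IsLocalization.lift (M := nonZeroDivisors F[X]) (g := (algebraMap F[X] (RatFunc F)).comp
    ((foldedW_compEquiv a ha : F[X] →ₐ[F] F[X]) : F[X] →+* F[X]))
    (by
      intro y
      have hy : (foldedW_compEquiv a ha) (y : F[X]) ≠ 0 := by
        intro hz
        have := (foldedW_compEquiv a ha).injective (hz.trans (map_zero _).symm)
        exact nonZeroDivisors.ne_zero y.2 this
      simp only [RingHom.comp_apply]
      rw [isUnit_iff_ne_zero]
      intro hz
      exact hy ((map_eq_zero_iff _ (IsFractionRing.injective F[X] (RatFunc F))).1 hz))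

private lemma foldedW_shiftHom_algebraMap (a : F) (ha : a ≠ 0) (f : F[X]) :
    foldedW_shiftHom a ha (algebraMap F[X] (RatFunc F) f)
      = algebraMap F[X] (RatFunc F) (f.comp (C a * X)) := by
  rw [foldedW_shiftHom, IsLocalization.lift_eq]
  simp [foldedW_compEquiv_apply]

private lemma foldedW_shiftHom_pow (a : F) (ha : a ≠ 0) (i : ℕ) (f : F[X]) :
    ((foldedW_shiftHom a ha) ^ i) (algebraMap F[X] (RatFunc F) f)
      = algebraMap F[X] (RatFunc F) (f.comp (C (a ^ i) * X)) := by
  induction i generalizing f with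
  | zero => simp
  | succ n ih =>
    have h1 : ((foldedW_shiftHom a ha) ^ (n+1)) (algebraMap F[X] (RatFunc F) f)
        = ((foldedW_shiftHom a ha) ^ n) ((foldedW_shiftHom a ha) (algebraMap F[X] (RatFunc F) f)) := by
      rw [pow_succ]; rfl
    rw [h1, foldedW_shiftHom_algebraMap, ih, comp_assoc]
    congr 2
    rw [mul_comp, C_comp, X_comp, ← mul_assoc, ← C_mul]
    rw [show a * a ^ n = a ^ (n + 1) from (pow_succ' a n).symm]

private lemma foldedW_lemB {s K1 : ℕ} (b : F)
    (hb : Function.Injective (fun m : Fin K1 => b ^ (m : ℕ)))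
    (f : Fin s → F[X]) (hf : ∀ j, (f j).natDegree < K1)
    (p : Fin s → F[X]) (hp : p ≠ 0)
    (hid : ∀ i : ℕ, ∑ j, p j * (f j).comp (C (b ^ i) * X) = 0) :
    ∃ μ : Fin s → F, μ ≠ 0 ∧ ∑ j, μ j • f j = 0 := by
  have expand : ∀ (c : F) (j : Fin s), (f j).comp (C c * X)
      = ∑ m : Fin K1, C ((f j).coeff (m : ℕ)) * C (c ^ (m : ℕ)) * X ^ (m : ℕ) := by
    intro c j
    have h1 : (f j).comp (C c * X) = eval₂ C (C c * X) (f j) := rfl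
    rw [h1, eval₂_eq_sum_range' C (hf j) (C c * X),
      Finset.sum_range fun m => C ((f j).coeff m) * (C c * X) ^ m]
    refine Finset.sum_congr rfl fun m _ => ?_
    rw [mul_pow, ← C_pow, ← mul_assoc]
  -- the Vandermonde system
  set w : Fin K1 → F[X] := fun m => (∑ j, C ((f j).coeff (m : ℕ)) * p j) * X ^ (m : ℕ) with hw
  have hv : ∀ i : ℕ, ∑ m : Fin K1, w m * (C (b ^ (m : ℕ))) ^ i = 0 := by
    intro i
    have h0 := hid i
    calc ∑ m : Fin K1, w m * (C (b ^ (m : ℕ))) ^ i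
        = ∑ m : Fin K1, ∑ j, C ((f j).coeff (m : ℕ)) * p j * X ^ (m : ℕ)
            * (C (b ^ (m : ℕ))) ^ i := by
          refine Finset.sum_congr rfl fun m _ => ?_
          show (∑ j, C ((f j).coeff (m : ℕ)) * p j) * X ^ (m : ℕ) * (C (b ^ (m : ℕ))) ^ i = _
          rw [Finset.sum_mul, Finset.sum_mul]
      _ = ∑ j, ∑ m : Fin K1, C ((f j).coeff (m : ℕ)) * p j * X ^ (m : ℕ)
            * (C (b ^ (m : ℕ))) ^ i := Finset.sum_comm
      _ = ∑ j, p j * (f j).comp (C (b ^ i) * X) := by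
          refine Finset.sum_congr rfl fun j _ => ?_
          rw [expand (b ^ i) j, Finset.mul_sum]
          refine Finset.sum_congr rfl fun m _ => ?_
          rw [← C_pow, ← pow_mul, ← pow_mul,
            show (m : ℕ) * i = i * (m : ℕ) from Nat.mul_comm _ _]
          ring
      _ = 0 := h0
  have hw0 : w = 0 := by
    apply Matrix.eq_zero_of_forall_pow_sum_mul_pow_eq_zero (f := fun m : Fin K1 => C (b ^ (m : ℕ)))
    · intro m m' hmm
      exact hb (C_injective hmm)
    · intro i
      exact hv (i : ℕ)
  have hS : ∀ m : Fin K1, ∑ j, C ((f j).coeff (m : ℕ)) * p j = 0 := by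
    intro m
    have := congrFun hw0 m
    simp only [hw, Pi.zero_apply] at this
    rcases mul_eq_zero.1 this with h | h
    · exact h
    · exact absurd h (pow_ne_zero _ X_ne_zero)
  obtain ⟨j1, hj1⟩ := Function.ne_iff.1 hp
  set d := (p j1).natDegree with hd
  refine ⟨fun j => (p j).coeff d, ?_, ?_⟩
  · intro hz
    have := congrFun hz j1
    simp only [Pi.zero_apply] at this
    exact hj1 (leadingCoeff_eq_zero.1 this)
  · ext m'
    rw [finset_sum_coeff]
    simp only [coeff_smul, smul_eq_mul, coeff_zero]
    by_cases hm : m' < K1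
    · have := congrArg (fun q => q.coeff d) (hS ⟨m', hm⟩)
      simp only [finset_sum_coeff, coeff_C_mul, coeff_zero] at this
      rw [← this]
      refine Finset.sum_congr rfl fun j _ => mul_comm _ _
    · refine Finset.sum_eq_zero fun j _ => ?_
      rw [coeff_eq_zero_of_natDegree_lt (lt_of_lt_of_le (hf j) (le_of_not_gt hm)), mul_zero]


end FoldedWronskianAux

/-- Folded Wronskian criterion for linear independence (Guruswami--Kopparty):
for polynomials of degree `< k` over a finite field of order `> k`, with `γ` a
generator of the multiplicative group, linear independence of the coefficient
vectors is equivalent to the folded Wronskian determinant being nonzero. -/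
theorem foldedWronskian_criterion {F : Type*} [Field F] [Fintype F]
    {s k : ℕ} (hks : s ≤ k) (hk : k < Fintype.card F)
    (γ : Fˣ) (hγ : ∀ x : Fˣ, x ∈ Subgroup.zpowers γ)
    (f : Fin s → F[X]) (hdeg : ∀ j, (f j).degree < k) :
    LinearIndependent F f ↔
      (Matrix.of fun i j : Fin s => (f j).comp (Polynomial.C ((γ : F) ^ (i : ℕ)) * X)).det
        ≠ 0 := by
  classical
  have hq2 : 1 < Fintype.card F := Fintype.one_lt_card
  have horder : orderOf γ = Fintype.card F - 1 := by
    rw [orderOf_eq_card_of_forall_mem_zpowers hγ, Nat.card_units, Nat.card_eq_fintype_card]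
  have hγ0 : (γ : F) ≠ 0 := Units.ne_zero γ
  have hb : Function.Injective (fun m : Fin (Fintype.card F - 1) => (γ : F) ^ (m : ℕ)) := by
    intro m m' hmm
    have hu : (γ ^ (m : ℕ) : Fˣ) = γ ^ (m' : ℕ) := Units.ext (by
      simpa [Units.val_pow_eq_pow_val] using hmm)
    have := pow_injOn_Iio_orderOf (x := γ)
      (by rw [horder]; exact Set.mem_Iio.2 m.2) (by rw [horder]; exact Set.mem_Iio.2 m'.2) hu
    exact Fin.ext this
  have hnd : ∀ j, (f j).natDegree < Fintype.card F - 1 := by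
    intro j
    rcases eq_or_ne (f j) 0 with h0 | h0
    · rw [h0, natDegree_zero]; omega
    · rw [natDegree_lt_iff_degree_lt h0]
      exact lt_of_lt_of_le (hdeg j) (Nat.cast_le.mpr (by omega))
  constructor
  · -- hard direction
    intro hli
    intro hdet0
    set K := RatFunc F
    set σ := foldedW_shiftHom (γ : F) hγ0 with hσ
    have detK : (Matrix.of fun i j : Fin s => (σ ^ (i : ℕ)) (algebraMap F[X] K (f j))).det = 0 := by
      have hM : (Matrix.of fun i j : Fin s => (σ ^ (i : ℕ)) (algebraMap F[X] K (f j)))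
          = (algebraMap F[X] K).mapMatrix
            (Matrix.of fun i j : Fin s => (f j).comp (C ((γ : F) ^ (i : ℕ)) * X)) := by
        ext i j
        simp only [Matrix.of_apply, RingHom.mapMatrix_apply, Matrix.map_apply]
        exact foldedW_shiftHom_pow _ hγ0 _ _
      rw [hM, ← RingHom.map_det, hdet0, map_zero]
    obtain ⟨c, hc0, hcinv, hcsum⟩ := foldedW_lemA σ s _ detK
    -- clear denominators
    set D : F[X] := ∏ j, (c j).denom with hD
    set p : Fin s → F[X] := fun j => (c j).num * ∏ j' ∈ Finset.univ.erase j, (c j').denom with hpdef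
    have halg : ∀ j, algebraMap F[X] K (p j) = c j * algebraMap F[X] K D := by
      intro j
      have hdj : algebraMap F[X] K ((c j).denom) ≠ 0 := fun hz =>
        (RatFunc.denom_ne_zero (c j))
          ((map_eq_zero_iff _ (IsFractionRing.injective F[X] K)).1 hz)
      have hcd : c j * algebraMap F[X] K ((c j).denom) = algebraMap F[X] K ((c j).num) := by
        have h' := RatFunc.num_div_denom (c j)
        rw [div_eq_iff hdj] at h'
        exact h'.symm
      rw [hpdef]
      rw [map_mul, map_prod, ← hcd, hD, map_prod,
        ← Finset.mul_prod_erase Finset.univ (fun j' => algebraMap F[X] K ((c j').denom))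
          (Finset.mem_univ j)]
      ring
    have hinv : ∀ (i : ℕ) j, (σ ^ i) (c j) = c j := by
      intro i j
      induction i with
      | zero => rfl
      | succ n ih =>
        have h1 : (σ ^ (n+1)) (c j) = σ ((σ ^ n) (c j)) := by rw [pow_succ']; rfl
        rw [h1, ih, hcinv]
    have hid : ∀ i : ℕ, ∑ j, p j * (f j).comp (C ((γ : F) ^ i) * X) = 0 := by
      intro i
      refine (map_eq_zero_iff (algebraMap F[X] K) (IsFractionRing.injective F[X] K)).1 ?_
      rw [map_sum]
      have : ∀ j, algebraMap F[X] K (p j * (f j).comp (C ((γ : F) ^ i) * X))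
          = algebraMap F[X] K D * ((σ ^ i) (c j) * (σ ^ i) (algebraMap F[X] K (f j))) := by
        intro j
        rw [map_mul, halg, ← foldedW_shiftHom_pow (γ : F) hγ0 i (f j), hinv]
        ring
      rw [Finset.sum_congr rfl fun j _ => this j, ← Finset.mul_sum]
      have hz : ∑ j, (σ ^ i) (c j) * (σ ^ i) (algebraMap F[X] K (f j)) = 0 := by
        have : ∑ j, (σ ^ i) (c j) * (σ ^ i) (algebraMap F[X] K (f j))
            = (σ ^ i) (∑ j, c j * algebraMap F[X] K (f j)) := by
          rw [map_sum]
          exact Finset.sum_congr rfl fun j _ => (map_mul _ _ _).symm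
        rw [this, hcsum, map_zero]
      rw [hz, mul_zero]
    have hpne : p ≠ 0 := by
      obtain ⟨j0, hj0⟩ := Function.ne_iff.1 hc0
      intro hz
      have := congrFun hz j0
      simp only [hpdef, Pi.zero_apply] at this
      rcases mul_eq_zero.1 this with h | h
      · exact RatFunc.num_ne_zero hj0 h
      · obtain ⟨j', _, hj'⟩ := Finset.prod_eq_zero_iff.1 h
        exact RatFunc.denom_ne_zero _ hj'
    obtain ⟨μ, hμ0, hμsum⟩ := foldedW_lemB (γ : F) hb f hnd p hpne hid
    obtain ⟨j1, hj1⟩ := Function.ne_iff.1 hμ0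
    exact hj1 ((Fintype.linearIndependent_iff.1 hli) μ hμsum j1)
  · -- easy direction
    intro hdet
    rw [Fintype.linearIndependent_iff]
    intro g hg
    by_contra hne
    push_neg at hne
    obtain ⟨j0, hj0⟩ := hne
    apply hdet
    rw [← Matrix.exists_mulVec_eq_zero_iff]
    refine ⟨fun j => C (g j), ?_, ?_⟩
    · intro hz
      have := congrFun hz j0
      simp only [Pi.zero_apply, C_eq_zero] at this
      exact hj0 this
    · funext i
      simp only [Matrix.mulVec, dotProduct, Matrix.of_apply, Pi.zero_apply]
      have hcomp : (∑ j, g j • f j).comp (C ((γ : F) ^ (i : ℕ)) * X) = 0 := by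
        rw [hg, zero_comp]
      have hsum : (∑ j, g j • f j).comp (C ((γ : F) ^ (i : ℕ)) * X)
          = ∑ j, (f j).comp (C ((γ : F) ^ (i : ℕ)) * X) * C (g j) := by
        have h1 : ∀ (h : Fin s → F[X]), (∑ j, h j).comp (C ((γ : F) ^ (i : ℕ)) * X)
            = ∑ j, (h j).comp (C ((γ : F) ^ (i : ℕ)) * X) := fun h => by
          exact Polynomial.eval₂_finset_sum C Finset.univ h (C ((γ : F) ^ (i : ℕ)) * X)
        rw [h1]
        refine Finset.sum_congr rfl fun j _ => ?_
        rw [smul_comp, smul_eq_C_mul, mul_comm]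
      rw [← hcomp, hsum]
end

section
/- Let f₁,…,f_s ∈ F_p[X] (p prime) be polynomials of degree < k with k < p. The coefficient vectors of f₁,…,f_s are linearly independent over F_p if and only if the classical Wronskian determinant det W(f₁,…,f_s)(X), whose (i,j)-entry is the (i-1)-th Hasse derivative f_j^{(i-1)}(X), is a nonzero polynomial. -/
open Polynomial
open Finset Matrix

lemma aux_descFactorial_cast {p : ℕ} (d i : ℕ) :
    ((d.descFactorial i : ℕ) : ZMod p) = ∏ t ∈ Finset.range i, ((d : ZMod p) - t) := by
  rcases le_or_gt i d with h | h
  · rw [Nat.descFactorial_eq_prod_range, Nat.cast_prod]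
    refine Finset.prod_congr rfl fun t ht => ?_
    rw [Nat.cast_sub (le_trans (Nat.le_of_lt_succ (Nat.lt_succ_of_lt (Finset.mem_range.mp ht))) h)]
  · rw [Nat.descFactorial_eq_zero_iff_lt.mpr h, Nat.cast_zero]
    refine (Finset.prod_eq_zero (Finset.mem_range.mpr h) ?_).symm
    simp

lemma aux_binom_det {p : ℕ} [Fact p.Prime] {s : ℕ} (hs : s ≤ p) (d : Fin s → ℕ)
    (hd : ∀ j, d j < p) (hinj : Function.Injective d) :
    (Matrix.of fun i j : Fin s => ((d j).choose (i : ℕ) : ZMod p)).det ≠ 0 := by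
  have hp := (Fact.out : p.Prime)
  set q : Fin s → (ZMod p)[X] := fun i => ∏ t ∈ Finset.range (i : ℕ), (X - C (t : ZMod p)) with hq
  have hmonic : ∀ i, (q i).Monic := fun i => monic_prod_of_monic _ _ fun t _ => monic_X_sub_C _
  have hdegq : ∀ i : Fin s, (q i).natDegree = (i : ℕ) := by
    intro i
    have h := natDegree_prod (Finset.range (i : ℕ)) (fun t => X - C (t : ZMod p))
      (fun t _ => (monic_X_sub_C ((t : ℕ) : ZMod p)).ne_zero)
    rw [hq]
    simp only [natDegree_X_sub_C] at h
    simpa using h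
  have hfac : ∀ i : Fin s, ((Nat.factorial i : ℕ) : ZMod p) ≠ 0 := by
    intro i
    rw [Ne, ZMod.natCast_eq_zero_iff, hp.dvd_factorial]
    exact not_le.mpr (lt_of_lt_of_le i.2 hs)
  have heval : ∀ (i j : Fin s), (q i).eval ((d j : ZMod p)) = ((d j).descFactorial (i : ℕ) : ZMod p) := by
    intro i j
    rw [aux_descFactorial_cast, hq]
    simp [eval_prod]
  have hentry : ∀ i j : Fin s, ((d j).choose (i : ℕ) : ZMod p)
      = ((Nat.factorial i : ZMod p))⁻¹ * (q i).eval ((d j : ZMod p)) := by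
    intro i j
    rw [heval, eq_inv_mul_iff_mul_eq₀ (hfac i), ← Nat.cast_mul,
      ← Nat.descFactorial_eq_factorial_mul_choose]
  have h1 : (Matrix.of fun i j : Fin s => ((d j).choose (i : ℕ) : ZMod p)).det
      = (∏ i : Fin s, ((Nat.factorial i : ZMod p))⁻¹) *
        (Matrix.of fun i j : Fin s => (q i).eval ((d j : ZMod p))).det := by
    rw [← Matrix.det_mul_column]
    congr 1
    ext i j
    exact hentry i j
  have h2 : (Matrix.of fun i j : Fin s => (q i).eval ((d j : ZMod p))).det
      = (Matrix.vandermonde fun j : Fin s => (d j : ZMod p)).det := by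
    have ht : (Matrix.of fun i j : Fin s => (q i).eval ((d j : ZMod p)))ᵀ
        = Matrix.of fun i j : Fin s => (q j).eval ((d i : ZMod p)) := by
      ext i j
      simp [Matrix.transpose_apply]
    rw [← Matrix.det_transpose, ht]
    exact (Matrix.det_eval_matrixOfPolynomials_eq_det_vandermonde (fun j => (d j : ZMod p)) q hdegq hmonic).symm
  rw [h1, h2]
  refine mul_ne_zero (Finset.prod_ne_zero_iff.mpr fun i _ => inv_ne_zero (hfac i)) ?_
  rw [Matrix.det_vandermonde_ne_zero_iff]
  intro a b hab
  apply hinj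
  have : (d a) % p = (d b) % p := by
    have := congrArg ZMod.val hab
    rwa [ZMod.val_natCast, ZMod.val_natCast] at this
  rwa [Nat.mod_eq_of_lt (hd a), Nat.mod_eq_of_lt (hd b)] at this

lemma aux_coeff_prod {R : Type*} [CommSemiring R] {ι : Type*} (s : Finset ι)
    (f : ι → R[X]) (d : ι → ℕ) (h : ∀ i ∈ s, (f i).natDegree ≤ d i) :
    (∏ i ∈ s, f i).coeff (∑ i ∈ s, d i) = ∏ i ∈ s, (f i).coeff (d i) := by
  induction s using Finset.cons_induction with
  | empty => simp
  | cons a s ha ih =>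
    rw [Finset.prod_cons, Finset.sum_cons, Finset.prod_cons,
      coeff_mul_add_eq_of_natDegree_le (h a (Finset.mem_cons_self a s))
        (le_trans (natDegree_prod_le s f) (Finset.sum_le_sum fun i hi => h i (Finset.mem_cons_of_mem hi))),
      ih fun i hi => h i (Finset.mem_cons_of_mem hi)]

lemma aux_Xpow_hasse {R : Type*} [CommSemiring R] (a m : ℕ) (g : R[X]) :
    (X ^ a * Polynomial.hasseDeriv a g).coeff m = (m.choose a : R) * g.coeff m := by
  rw [coeff_X_pow_mul']
  rcases le_or_gt a m with h | h
  · rw [if_pos h, hasseDeriv_coeff, Nat.sub_add_cancel h]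
  · rw [if_neg (not_le.mpr h), Nat.choose_eq_zero_of_lt h]
    simp

lemma detW_ne_zero_of_distinct {p : ℕ} [Fact p.Prime] {s k : ℕ} (hks : s ≤ k) (hk : k < p)
    (f : Fin s → (ZMod p)[X]) (hne : ∀ j, f j ≠ 0) (hdeg : ∀ j, (f j).natDegree < k)
    (hinj : Function.Injective fun j => (f j).natDegree) :
    (Matrix.of fun i j : Fin s => Polynomial.hasseDeriv (i : ℕ) (f j)).det ≠ 0 := by
  set d : Fin s → ℕ := fun j => (f j).natDegree with hd
  set W : Matrix (Fin s) (Fin s) (ZMod p)[X] :=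
    Matrix.of fun i j : Fin s => Polynomial.hasseDeriv (i : ℕ) (f j) with hW
  set M : Matrix (Fin s) (Fin s) (ZMod p)[X] :=
    Matrix.of fun i j : Fin s => X ^ (i : ℕ) * Polynomial.hasseDeriv (i : ℕ) (f j) with hM
  have hMW : M.det = (∏ i : Fin s, (X : (ZMod p)[X]) ^ (i : ℕ)) * W.det := by
    rw [hM, hW]
    exact Matrix.det_mul_column (fun i : Fin s => (X : (ZMod p)[X]) ^ (i : ℕ)) _
  -- natDegree bound for entries of M
  have hMdeg : ∀ i j : Fin s, (M i j).natDegree ≤ d j := by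
    intro i j
    rw [natDegree_le_iff_coeff_eq_zero]
    intro m hm
    rw [hM, Matrix.of_apply, aux_Xpow_hasse, coeff_eq_zero_of_natDegree_lt hm, mul_zero]
  -- the coefficient of M.det at total degree equals a nonzero determinant
  have hcoeff : M.det.coeff (∑ j : Fin s, d j) =
      (Matrix.of fun i j : Fin s => ((d j).choose (i : ℕ) : ZMod p) * (f j).leadingCoeff).det := by
    rw [Matrix.det_apply, Matrix.det_apply, finset_sum_coeff]
    refine Finset.sum_congr rfl fun σ _ => ?_
    rw [coeff_smul]
    congr 1
    have hco := aux_coeff_prod Finset.univ (fun i => M (σ i) i) (fun i => d i)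
      (fun i _ => hMdeg (σ i) i)
    rw [hco]
    refine Finset.prod_congr rfl fun i _ => ?_
    show (M (σ i) i).coeff (d i) = _
    rw [hM]
    show (X ^ ((σ i : Fin s) : ℕ) * Polynomial.hasseDeriv ((σ i : Fin s) : ℕ) (f i)).coeff (d i) = _
    rw [aux_Xpow_hasse]
    rfl
  have hN : (Matrix.of fun i j : Fin s => ((d j).choose (i : ℕ) : ZMod p) * (f j).leadingCoeff).det ≠ 0 := by
    have h1 : (Matrix.of fun i j : Fin s => ((d j).choose (i : ℕ) : ZMod p) * (f j).leadingCoeff).det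
        = (∏ j : Fin s, (f j).leadingCoeff) *
          (Matrix.of fun i j : Fin s => ((d j).choose (i : ℕ) : ZMod p)).det := by
      rw [← Matrix.det_mul_row (fun j => (f j).leadingCoeff)]
      congr 1
      ext i j
      simp [mul_comm]
    rw [h1]
    exact mul_ne_zero (Finset.prod_ne_zero_iff.mpr fun j _ => leadingCoeff_ne_zero.mpr (hne j))
      (aux_binom_det (hks.trans (le_of_lt hk)) d (fun j => lt_trans (hdeg j) hk) hinj)
  intro h0
  rw [h0, mul_zero] at hMW
  rw [hMW, coeff_zero] at hcoeff
  exact hN hcoeff.symm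

lemma detW_ne_zero_of_li {p : ℕ} [Fact p.Prime] {s k : ℕ} (hks : s ≤ k) (hk : k < p) :
    ∀ n : ℕ, ∀ f : Fin s → (ZMod p)[X], (∀ j, (f j).degree < (k : ℕ)) →
      (∑ j : Fin s, (f j).natDegree) = n → LinearIndependent (ZMod p) f →
      (Matrix.of fun i j : Fin s => Polynomial.hasseDeriv (i : ℕ) (f j)).det ≠ 0 := by
  intro n
  induction n using Nat.strong_induction_on with
  | _ n IH =>
  intro f hdeg hsum hli
  rcases Nat.eq_zero_or_pos s with hs | hs
  · subst hs
    haveI : IsEmpty (Fin 0) := inferInstance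
    rw [Matrix.det_isEmpty]
    exact one_ne_zero
  have hne : ∀ j, f j ≠ 0 := fun j => hli.ne_zero j
  by_cases hinj : Function.Injective fun j => (f j).natDegree
  · exact detW_ne_zero_of_distinct hks hk f hne
      (fun j => (natDegree_lt_iff_degree_lt (hne j)).mpr (hdeg j)) hinj
  · rw [Function.not_injective_iff] at hinj
    obtain ⟨a, b, hab, hne'⟩ := hinj
    -- reduce degree at column a by subtracting multiple of column b
    set c : ZMod p := (f a).leadingCoeff / (f b).leadingCoeff with hc
    have hcne : c ≠ 0 := div_ne_zero (leadingCoeff_ne_zero.mpr (hne a))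
      (leadingCoeff_ne_zero.mpr (hne b))
    have hdegeq : (f a).degree = (f b).degree := by
      rw [degree_eq_natDegree (hne a), degree_eq_natDegree (hne b), hab]
    set g : Fin s → (ZMod p)[X] := Function.update f a (f a - c • f b) with hg
    have hga : g a = f a - c • f b := Function.update_self a _ f
    have hgne : ∀ j, j ≠ a → g j = f j := fun j hj => Function.update_of_ne hj _ f
    -- degree drop
    have hlt : (g a).degree < (f a).degree := by
      rw [hga, smul_eq_C_mul]
      refine degree_sub_lt ?_ (hne a) ?_
      · rw [degree_C_mul hcne, hdegeq]
      · rw [leadingCoeff_mul, leadingCoeff_C, hc, div_mul_cancel₀ _ (leadingCoeff_ne_zero.mpr (hne b))]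
    -- linear independence of g
    have hlig : LinearIndependent (ZMod p) g := by
      rw [Fintype.linearIndependent_iff] at hli ⊢
      intro u hu
      have hsum2 : ∑ j : Fin s, u j • g j
          = (∑ j : Fin s, u j • f j) - (u a * c) • f b := by
        have h1 : ∀ j : Fin s, u j • g j = u j • f j + (if j = a then -((u a * c) • f b) else 0) := by
          intro j
          by_cases hj : j = a
          · subst hj
            rw [hga, if_pos rfl, smul_sub, smul_smul]
            ring
          · rw [hgne j hj, if_neg hj, add_zero]
        rw [Finset.sum_congr rfl fun j _ => h1 j, Finset.sum_add_distrib,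
          Finset.sum_ite_eq' Finset.univ a fun _ => -((u a * c) • f b)]
        simp [sub_eq_add_neg]
      rw [hsum2, sub_eq_zero] at hu
      have hu' : ∑ j : Fin s, (u j - (if j = b then u a * c else 0)) • f j = 0 := by
        rw [Finset.sum_congr rfl fun j _ => (sub_smul _ _ _ : _ = u j • f j - _),
          Finset.sum_sub_distrib]
        have : ∑ j : Fin s, (if j = b then u a * c else 0) • f j = (u a * c) • f b := by
          rw [Finset.sum_congr rfl (fun j _ => by rw [ite_smul, zero_smul]),
            Finset.sum_ite_eq' Finset.univ b fun j => (u a * c) • f j]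
          simp
        rw [this, hu, sub_self]
      have hz := hli _ hu'
      have hua : u a = 0 := by
        have := hz a
        rwa [if_neg hne', sub_zero] at this
      intro j
      by_cases hj : j = b
      · have := hz j
        rwa [if_pos hj, hua, zero_mul, sub_zero] at this
      · have := hz j
        rwa [if_neg hj, sub_zero] at this
    have hga0 : g a ≠ 0 := hlig.ne_zero a
    -- degrees of g
    have hdegg : ∀ j, (g j).degree < (k : ℕ) := by
      intro j
      by_cases hj : j = a
      · rw [hj]; exact lt_trans hlt (hdeg a)
      · rw [hgne j hj]; exact hdeg j
    -- sum decreases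
    have hsumlt : (∑ j : Fin s, (g j).natDegree) < n := by
      rw [← hsum]
      refine Finset.sum_lt_sum (fun j _ => ?_) ⟨a, Finset.mem_univ a, ?_⟩
      · by_cases hj : j = a
        · rw [hj]
          exact le_of_lt (natDegree_lt_natDegree hga0 hlt)
        · rw [hgne j hj]
      · exact natDegree_lt_natDegree hga0 hlt
    have hdetg := IH _ hsumlt g hdegg rfl hlig
    -- determinants agree
    have hdet_eq : (Matrix.of fun i j : Fin s => Polynomial.hasseDeriv (i : ℕ) (f j)).det
        = (Matrix.of fun i j : Fin s => Polynomial.hasseDeriv (i : ℕ) (g j)).det := by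
      set W : Matrix (Fin s) (Fin s) (ZMod p)[X] :=
        Matrix.of fun i j : Fin s => Polynomial.hasseDeriv (i : ℕ) (f j) with hWdef
      have hupd : (Matrix.of fun i j : Fin s => Polynomial.hasseDeriv (i : ℕ) (g j))
          = W.updateCol a fun i => W i a + (-(C c)) • W i b := by
        refine Matrix.ext fun i j => ?_
        rw [Matrix.updateCol_apply]
        by_cases hj : j = a
        · rw [if_pos hj]
          show Polynomial.hasseDeriv (i : ℕ) (g j) = _
          rw [hj, hga, map_sub, _root_.map_smul]
          show Polynomial.hasseDeriv (i : ℕ) (f a) - c • Polynomial.hasseDeriv (i : ℕ) (f b)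
            = Polynomial.hasseDeriv (i : ℕ) (f a) + (-(C c)) • Polynomial.hasseDeriv (i : ℕ) (f b)
          rw [smul_eq_C_mul, smul_eq_mul]
          ring
        · rw [if_neg hj]
          show Polynomial.hasseDeriv (i : ℕ) (g j) = Polynomial.hasseDeriv (i : ℕ) (f j)
          rw [hgne j hj]
      rw [hupd, Matrix.det_updateCol_add_smul_self W hne' (-(C c))]
    rw [hdet_eq]
    exact hdetg

/-- Classical Wronskian (with Hasse derivatives) criterion for linear independence:
for polynomials of degree `< k` over `F_p` with `k < p`, the coefficient vectors are
linearly independent iff the Wronskian determinant is a nonzero polynomial. -/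
theorem classicalWronskian_criterion {p : ℕ} [Fact p.Prime]
    {s k : ℕ} (hks : s ≤ k) (hk : k < p)
    (f : Fin s → (ZMod p)[X]) (hdeg : ∀ j, (f j).degree < k) :
    LinearIndependent (ZMod p) f ↔
      (Matrix.of fun i j : Fin s => Polynomial.hasseDeriv (i : ℕ) (f j)).det ≠ 0 := by
  constructor
  · intro hli
    exact detW_ne_zero_of_li hks hk _ f hdeg rfl hli
  · intro hdet
    by_contra hli
    rw [Fintype.not_linearIndependent_iff] at hli
    obtain ⟨u, hu, i0, hi0⟩ := hli
    set W : Matrix (Fin s) (Fin s) (ZMod p)[X] :=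
      Matrix.of fun i j : Fin s => Polynomial.hasseDeriv (i : ℕ) (f j) with hWdef
    have hmv : W.mulVec (fun j => C (u j)) = 0 := by
      funext i
      show ∑ j : Fin s, W i j * C (u j) = 0
      have h1 : ∀ j : Fin s, W i j * C (u j) = Polynomial.hasseDeriv (i : ℕ) (u j • f j) := by
        intro j
        rw [_root_.map_smul, smul_eq_C_mul, mul_comm]
        rfl
      rw [Finset.sum_congr rfl fun j _ => h1 j, ← map_sum, hu, map_zero]
    have h2 := congrArg (fun v => (Matrix.adjugate W).mulVec v) hmv
    simp only [Matrix.mulVec_mulVec, Matrix.adjugate_mul, Matrix.smul_mulVec,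
      Matrix.one_mulVec, Matrix.mulVec_zero] at h2
    have h3 := congrFun h2 i0
    rw [Pi.smul_apply, smul_eq_mul, Pi.zero_apply, mul_eq_zero] at h3
    rcases h3 with h3 | h3
    · exact hdet h3
    · exact hi0 (by simpa using h3)
end

section
/- Let h₁,…,h_ℓ ∈ F_q[X] be polynomials, γ ∈ F_q^×, α ∈ F_q, and s ≥ ℓ. Suppose that for some t ≤ ℓ the polynomials h₁,…,h_t all vanish at γ^j α for every j = 0,1,…,s-1, and that the powers γ^0α, γ^1α, …, γ^{s-1}α are pairwise distinct and nonzero. Then for each j with 0 ≤ j ≤ s-ℓ, the point γ^j α is a root of det W_γ(h₁,…,h_ℓ)(X) with multiplicity at least t, where W_γ has (i,j)-entry h_j(γ^{i-1}X). -/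
/-!
Every term of the Leibniz expansion of the determinant contains, for each column `v < t`, a
factor `h_v(γ^u X)`; it vanishes at `X = γ^j α`, because `γ^(u+j) α` is one of the `s` points
(`u + j < ℓ + (s - ℓ) = s`). So each term is divisible by `(X - γ^j α)^t`.
-/

open Polynomial

theorem Matrix.pow_card_dvd_det_of_forall_dvd_col {R n : Type*} [CommRing R] [Fintype n]
    [DecidableEq n] (M : Matrix n n R) (p : R) (S : Finset n)
    (hS : ∀ u, ∀ v ∈ S, p ∣ M u v) : p ^ S.card ∣ M.det := by
  rw [Matrix.det_apply]
  refine Finset.dvd_sum fun σ _ => ?_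
  rw [Units.smul_def, zsmul_eq_mul, ← Finset.prod_mul_prod_compl S]
  refine dvd_mul_of_dvd_right (dvd_mul_of_dvd_left ?_ _) _
  rw [← Finset.prod_const]
  exact Finset.prod_dvd_prod_of_dvd _ _ fun v hv => hS _ v hv

theorem Polynomial.X_sub_C_dvd_comp_C_mul_X {R : Type*} [CommRing R] {p : R[X]} {a c : R}
    (h : p.eval (c * a) = 0) : X - C a ∣ p.comp (C c * X) := by
  rw [dvd_iff_isRoot, IsRoot, eval_comp, eval_mul, eval_C, eval_X, h]

theorem foldedWronskian_det_root_multiplicity_general {F : Type*} [Field F]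
    {ℓ s t : ℕ} (hsℓ : ℓ ≤ s) (htℓ : t ≤ ℓ)
    (γ : Fˣ) (α : F)
    (h : Fin ℓ → F[X])
    (hvanish : ∀ v : Fin ℓ, (v : ℕ) < t → ∀ j < s, (h v).eval ((γ : F) ^ j * α) = 0) :
    ∀ j ≤ s - ℓ,
      (X - Polynomial.C ((γ : F) ^ j * α)) ^ t ∣
        (Matrix.of fun u v : Fin ℓ =>
          (h v).comp (Polynomial.C ((γ : F) ^ (u : ℕ)) * X)).det := by
  intro j hj
  have hcard : (Finset.univ.filter fun v : Fin ℓ => (v : ℕ) < t).card = t := by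
    rw [Fin.card_filter_val_lt, min_eq_right htℓ]
  conv_lhs => rw [← hcard]
  refine Matrix.pow_card_dvd_det_of_forall_dvd_col _ _ _ fun u v hv => ?_
  refine X_sub_C_dvd_comp_C_mul_X ?_
  rw [← mul_assoc, ← pow_add]
  exact hvanish v (Finset.mem_filter.mp hv).2 _ (by omega)

/-- If `h 0, …, h (t-1)` all vanish at the `s` points `γ^j α` (`0 ≤ j < s`), which are
pairwise distinct and nonzero, then for each `0 ≤ j ≤ s - ℓ` the point `γ^j α` is a root
of the folded Wronskian determinant of `h 0, …, h (ℓ-1)` with multiplicity at least `t`. -/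
theorem foldedWronskian_det_root_multiplicity {F : Type*} [Field F]
    {ℓ s t : ℕ} (hsℓ : ℓ ≤ s) (htℓ : t ≤ ℓ)
    (γ : Fˣ) (α : F) (hα : α ≠ 0)
    (hdist : ∀ j j' : ℕ, j < s → j' < s → (γ : F) ^ j * α = (γ : F) ^ j' * α → j = j')
    (h : Fin ℓ → F[X])
    (hvanish : ∀ v : Fin ℓ, (v : ℕ) < t → ∀ j < s, (h v).eval ((γ : F) ^ j * α) = 0) :
    ∀ j ≤ s - ℓ,
      (X - Polynomial.C ((γ : F) ^ j * α)) ^ t ∣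
        (Matrix.of fun u v : Fin ℓ =>
          (h v).comp (Polynomial.C ((γ : F) ^ (u : ℕ)) * X)).det :=
  foldedWronskian_det_root_multiplicity_general hsℓ htℓ γ α h hvanish
end

section
/- Let L ≥ 1, s ≥ L, and R ∈ [0,1]. If L > (1-R-ε)/ε and s > L(L-1)R/(εL-(1-R-ε)) + L - 1 for some ε > 0 with εL > 1-R-ε, then (L/(L+1))·(1 - sR/(s-L+1)) > 1 - R - ε. -/
/-!
Write `n = s - L + 1` and `D = εL - (1 - R - ε)`. Since `s = n + L - 1`, the gap between the
radius and `1 - R - ε` is exactly `(nD - L(L-1)R) / ((L+1)n)`, and the lower bound on `s` says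
precisely that `nD > L(L-1)R`.
-/

theorem listDecodingRadius_sub_eq (ε R L s : ℝ) (hn : s - L + 1 ≠ 0) (hL : L + 1 ≠ 0) :
    L / (L + 1) * (1 - s * R / (s - L + 1)) - (1 - R - ε) =
      ((s - L + 1) * (ε * L - (1 - R - ε)) - L * (L - 1) * R) / ((L + 1) * (s - L + 1)) := by
  field_simp
  ring

theorem lt_listDecodingRadius (ε R L s : ℝ) (hn : 0 < s - L + 1) (hL : 0 < L + 1)
    (hgap : L * (L - 1) * R < (s - L + 1) * (ε * L - (1 - R - ε))) :
    1 - R - ε < L / (L + 1) * (1 - s * R / (s - L + 1)) := by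
  rw [← sub_pos, listDecodingRadius_sub_eq ε R L s hn.ne' hL.ne']
  exact div_pos (sub_pos.mpr hgap) (mul_pos hL hn)

theorem frs_parameter_computation_general (ε R : ℝ) (L s : ℕ)
    (hsL : L ≤ s)
    (hden : 0 < ε * L - (1 - R - ε))
    (hslb : (s : ℝ) > L * (L - 1) * R / (ε * L - (1 - R - ε)) + L - 1) :
    ((L : ℝ) / (L + 1)) * (1 - s * R / (s - L + 1)) > 1 - R - ε := by
  have hn : (0 : ℝ) < s - L + 1 := by
    have : (L : ℝ) ≤ s := by exact_mod_cast hsL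
    linarith
  have hgap : (L : ℝ) * (L - 1) * R < (s - L + 1) * (ε * L - (1 - R - ε)) :=
    (div_lt_iff₀ hden).mp (by linarith)
  exact lt_listDecodingRadius ε R L s hn (by positivity) hgap

/-- Parameter computation: with `L > (1-R-ε)/ε` and
`s > L(L-1)R/(εL-(1-R-ε)) + L - 1`, the list-decoding radius
`(L/(L+1))·(1 - sR/(s-L+1))` exceeds `1 - R - ε`. -/
theorem frs_parameter_computation (ε R : ℝ) (L s : ℕ)
    (hε : 0 < ε) (hR0 : 0 ≤ R) (hR1 : R ≤ 1) (hL : 1 ≤ L) (hsL : L ≤ s)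
    (hden : 0 < ε * L - (1 - R - ε))
    (hLlb : (L : ℝ) > (1 - R - ε) / ε)
    (hslb : (s : ℝ) > L * (L - 1) * R / (ε * L - (1 - R - ε)) + L - 1) :
    ((L : ℝ) / (L + 1)) * (1 - s * R / (s - L + 1)) > 1 - R - ε :=
  frs_parameter_computation_general ε R L s hsL hden hslb
end
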